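/- Let G be a group generated by a finite set S, let p > q ≥ 1, and let f : G → ℝ be finitely supported. Then h = |f|^{p/q} has the same support as f and satisfies ‖∇h‖_q / ‖h‖_q ≤ 2^{1/q} · |S|^{(p−q)/(pq)} · (p/q) · ‖∇f‖_p / ‖f‖_p, provided f is not identically zero. -/

import Mathlib

/-!
The mean value inequality for `x ↦ x ^ (p/q)` gives, pointwise,
`| |a|^(p/q) - |b|^(p/q) | ≤ (p/q) · max(|a|, |b|)^(p/q - 1) · |a - b|`.
Raising this to the `q`-th power and summing over the edges `(g, gs)`, Hölder's inequality with
exponents `p` and `pq/(p - q)` bounds `‖∇h‖_q` by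
`(p/q) · ‖∇f‖_p · (∑ max(|f g|, |f (gs)|)^p)^((p-q)/(pq))`, and the last sum is at most
`2|S| ‖f‖_p^p` because right translation by `s` preserves `‖f‖_p`. As `‖h‖_q = ‖f‖_p^(p/q)`,
dividing by `‖h‖_q` gives the claim, with `2^((p-q)/(pq)) ≤ 2^(1/q)`.
-/

open Finset Function Pointwise

theorem Real.Lr_le_Lp_mul_Lq_of_nonneg {ι : Type*} (s : Finset ι) {f g : ι → ℝ} {p q r : ℝ}
    (hpqr : p.HolderTriple q r) (hf : ∀ i, 0 ≤ f i) (hg : ∀ i, 0 ≤ g i) :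
    (∑ i ∈ s, (f i * g i) ^ r) ^ (1 / r) ≤
      (∑ i ∈ s, f i ^ p) ^ (1 / p) * (∑ i ∈ s, g i ^ q) ^ (1 / q) := by
  lift f to ι → NNReal using hf
  lift g to ι → NNReal using hg
  beta_reduce
  exact_mod_cast NNReal.Lr_le_Lp_mul_Lq s f g hpqr

theorem Real.rpow_sub_rpow_le_mul_sub {x y α : ℝ} (hy : 0 ≤ y) (hyx : y ≤ x) (hα : 1 ≤ α) :
    x ^ α - y ^ α ≤ α * x ^ (α - 1) * (x - y) := by
  rcases hyx.eq_or_lt with rfl | hlt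
  · simp
  have hslope := (convexOn_rpow hα).slope_le_of_hasDerivAt hy (hy.trans hlt.le) hlt
    (Real.hasDerivAt_rpow_const (Or.inr hα))
  rwa [slope_def_field, div_le_iff₀ (sub_pos.2 hlt)] at hslope

theorem abs_abs_rpow_sub_abs_rpow_le {α : ℝ} (hα : 1 ≤ α) (a b : ℝ) :
    |(|a| ^ α - |b| ^ α)| ≤ α * max |a| |b| ^ (α - 1) * |a - b| := by
  wlog hba : |b| ≤ |a| generalizing a b
  · simpa only [abs_sub_comm, max_comm] using this b a (le_of_not_ge hba)
  rw [abs_of_nonneg (sub_nonneg.2 (Real.rpow_le_rpow (abs_nonneg b) hba (by linarith))),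
    max_eq_left hba]
  calc |a| ^ α - |b| ^ α ≤ α * |a| ^ (α - 1) * (|a| - |b|) :=
        Real.rpow_sub_rpow_le_mul_sub (abs_nonneg b) hba hα
    _ ≤ α * |a| ^ (α - 1) * |a - b| := by gcongr; exact abs_sub_abs_le_abs_sub a b

theorem Lq_abs_rpow_sub_abs_rpow_le {ι : Type*} (P : Finset ι) (u w : ι → ℝ) {p q : ℝ}
    (hq : 0 < q) (hqp : q < p) :
    (∑ i ∈ P, |(|u i| ^ (p / q) - |w i| ^ (p / q))| ^ q) ^ (1 / q) ≤
      p / q * (∑ i ∈ P, |u i - w i| ^ p) ^ (1 / p) *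
        (∑ i ∈ P, max |u i| |w i| ^ p) ^ ((p - q) / (p * q)) := by
  have hp : 0 < p := hq.trans hqp
  have hα : 1 ≤ p / q := (one_le_div hq).2 hqp.le
  set M : ι → ℝ := fun i => max |u i| |w i|
  have hM : ∀ i, 0 ≤ M i := fun i => (abs_nonneg _).trans (le_max_left _ _)
  have htriple : p.HolderTriple (p * q / (p - q)) q := by
    refine ⟨?_, hp, by have := sub_pos.2 hqp; positivity⟩
    field_simp
    ring
  have hY : ∀ i, 0 ≤ |u i - w i| * M i ^ (p / q - 1) := fun i =>
    mul_nonneg (abs_nonneg _) (Real.rpow_nonneg (hM i) _)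
  calc (∑ i ∈ P, |(|u i| ^ (p / q) - |w i| ^ (p / q))| ^ q) ^ (1 / q)
      ≤ (∑ i ∈ P, (p / q * (|u i - w i| * M i ^ (p / q - 1))) ^ q) ^ (1 / q) := by
        gcongr with i
        exact (abs_abs_rpow_sub_abs_rpow_le hα _ _).trans_eq (by ring)
    _ = ((p / q) ^ q * ∑ i ∈ P, (|u i - w i| * M i ^ (p / q - 1)) ^ q) ^ (1 / q) := by
        rw [Finset.mul_sum]
        simp_rw [Real.mul_rpow (by positivity : 0 ≤ p / q) (hY _)]
    _ = p / q * (∑ i ∈ P, (|u i - w i| * M i ^ (p / q - 1)) ^ q) ^ (1 / q) := by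
        rw [Real.mul_rpow (by positivity) (Finset.sum_nonneg fun i _ => Real.rpow_nonneg (hY i) _),
          ← Real.rpow_mul (by positivity), mul_one_div_cancel hq.ne', Real.rpow_one]
    _ ≤ p / q * ((∑ i ∈ P, |u i - w i| ^ p) ^ (1 / p) *
          (∑ i ∈ P, (M i ^ (p / q - 1)) ^ (p * q / (p - q))) ^ (1 / (p * q / (p - q)))) := by
        gcongr
        exact Real.Lr_le_Lp_mul_Lq_of_nonneg P htriple (fun i => abs_nonneg _)
          (fun i => Real.rpow_nonneg (hM i) _)
    _ = _ := by
        have hexp : (p / q - 1) * (p * q / (p - q)) = p := by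
          field_simp [(sub_pos.2 hqp).ne']
        simp_rw [← Real.rpow_mul (hM _), hexp, one_div_div, mul_assoc]
        rfl

theorem tsum_comp_eq_sum_of_forall_notMem {α : Type*} {F : Finset α} {f : α → ℝ}
    (hF : ∀ g ∉ F, f g = 0) (ψ : ℝ → ℝ) (hψ : ψ 0 = 0) :
    ∑' g, ψ (f g) = ∑ g ∈ F, ψ (f g) :=
  tsum_eq_sum fun g hg => by rw [hF g hg, hψ]

section

variable {G : Type*} [Group G] {S F : Finset G} {f : G → ℝ}

theorem exists_finset_forall_notMem_mul_eq_zero (S : Finset G) (hf : f.support.Finite) :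
    ∃ F : Finset G, ∀ g ∉ F, f g = 0 ∧ ∀ s ∈ S, f (g * s) = 0 := by
  classical
  refine ⟨hf.toFinset * (insert 1 S)⁻¹, fun g hg => ⟨?_, fun s hs => ?_⟩⟩
  · by_contra h
    have hmem := mul_mem_mul (hf.mem_toFinset.2 h) (inv_mem_inv (mem_insert_self 1 S))
    rw [inv_one, mul_one] at hmem
    exact hg hmem
  · by_contra h
    have hmem := mul_mem_mul (hf.mem_toFinset.2 h) (inv_mem_inv (mem_insert_of_mem (b := 1) hs))
    rw [mul_inv_cancel_right] at hmem
    exact hg hmem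

theorem tsum_sum_comp_mul_eq_sum_product (hF : ∀ g ∉ F, f g = 0 ∧ ∀ s ∈ S, f (g * s) = 0)
    (φ : ℝ → ℝ → ℝ) (hφ : φ 0 0 = 0) :
    ∑' g, ∑ s ∈ S, φ (f g) (f (g * s)) = ∑ x ∈ F ×ˢ S, φ (f x.1) (f (x.1 * x.2)) := by
  rw [sum_product]
  exact tsum_eq_sum fun g hg => sum_eq_zero fun s hs => by rw [(hF g hg).1, (hF g hg).2 s hs, hφ]

theorem sum_comp_mul_right_eq (hF : ∀ g ∉ F, f g = 0 ∧ ∀ s ∈ S, f (g * s) = 0)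
    (ψ : ℝ → ℝ) (hψ : ψ 0 = 0) {s : G} (hs : s ∈ S) :
    ∑ g ∈ F, ψ (f (g * s)) = ∑ g ∈ F, ψ (f g) := by
  rw [← tsum_comp_eq_sum_of_forall_notMem (f := fun g => f (g * s))
      (fun g hg => (hF g hg).2 s hs) ψ hψ,
    ← tsum_comp_eq_sum_of_forall_notMem (fun g hg => (hF g hg).1) ψ hψ]
  exact (Equiv.mulRight s).tsum_eq fun g => ψ (f g)

theorem sum_product_max_abs_rpow_le (hF : ∀ g ∉ F, f g = 0 ∧ ∀ s ∈ S, f (g * s) = 0)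
    {p : ℝ} (hp : 0 < p) :
    ∑ x ∈ F ×ˢ S, max |f x.1| |f (x.1 * x.2)| ^ p ≤ 2 * #S * ∑ g ∈ F, |f g| ^ p := by
  have hψ : |(0 : ℝ)| ^ p = 0 := by simp [hp.ne']
  calc ∑ x ∈ F ×ˢ S, max |f x.1| |f (x.1 * x.2)| ^ p
      ≤ ∑ x ∈ F ×ˢ S, (|f x.1| ^ p + |f (x.1 * x.2)| ^ p) := sum_le_sum fun x _ => by
        rw [Real.rpow_max (abs_nonneg _) (abs_nonneg _) hp.le]
        exact max_le_add_of_nonneg (by positivity) (by positivity)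
    _ = ∑ s ∈ S, 2 * ∑ g ∈ F, |f g| ^ p := by
        rw [sum_product_right]
        refine sum_congr rfl fun s hs => ?_
        rw [sum_add_distrib, sum_comp_mul_right_eq hF (fun x => |x| ^ p) hψ hs, two_mul]
    _ = 2 * #S * ∑ g ∈ F, |f g| ^ p := by rw [sum_const, nsmul_eq_mul]; ring

end

theorem stmt_2_general (G : Type*) [Group G] (S : Finset G)
    (p q : ℝ) (hq : 1 ≤ q) (hpq : q < p)
    (f : G → ℝ) (hf : (Function.support f).Finite) (hf0 : f ≠ 0) :
    Function.support (fun g : G => |f g| ^ (p / q)) = Function.support f ∧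
    (∑' g : G, ∑ s ∈ S, |(|f g| ^ (p / q)) - (|f (g * s)| ^ (p / q))| ^ q) ^ (1 / q)
        / (∑' g : G, |(|f g| ^ (p / q))| ^ q) ^ (1 / q)
      ≤ 2 ^ (1 / q) * (S.card : ℝ) ^ ((p - q) / (p * q)) * (p / q) *
          ((∑' g : G, ∑ s ∈ S, |f g - f (g * s)| ^ p) ^ (1 / p)
            / (∑' g : G, |f g| ^ p) ^ (1 / p)) := by
  have hq0 : 0 < q := by linarith
  have hp0 : 0 < p := by linarith
  have hα : p / q ≠ 0 := by positivity
  refine ⟨?_, ?_⟩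
  · ext g
    simp [Real.rpow_eq_zero (abs_nonneg _) hα]
  obtain ⟨F, hF⟩ := exists_finset_forall_notMem_mul_eq_zero S hf
  have hF₁ : ∀ g ∉ F, f g = 0 := fun g hg => (hF g hg).1
  have hh : ∀ g, |(|f g| ^ (p / q))| ^ q = |f g| ^ p := fun g => by
    rw [abs_of_nonneg (by positivity), ← Real.rpow_mul (abs_nonneg _), div_mul_cancel₀ _ hq0.ne']
  simp_rw [hh]
  rw [tsum_sum_comp_mul_eq_sum_product hF (fun a b => |(|a| ^ (p / q)) - (|b| ^ (p / q))| ^ q)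
      (by simp [hα, hq0.ne']),
    tsum_sum_comp_mul_eq_sum_product hF (fun a b => |a - b| ^ p) (by simp [hp0.ne']),
    tsum_comp_eq_sum_of_forall_notMem hF₁ (fun a => |a| ^ p) (by simp [hp0.ne'])]
  set D := ∑ g ∈ F, |f g| ^ p
  have hD : 0 < D := by
    obtain ⟨g, hg⟩ := Function.ne_iff.1 hf0
    have hgF : g ∈ F := not_imp_comm.1 (hF₁ g) hg
    exact (Real.rpow_pos_of_pos (abs_pos.2 hg) p).trans_le
      (single_le_sum (f := fun g => |f g| ^ p) (fun g _ => by positivity) hgF)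
  have he : (p - q) / (p * q) + 1 / p = 1 / q := by field_simp; ring
  have hD' : D ^ (1 / q) = D ^ ((p - q) / (p * q)) * D ^ (1 / p) := by
    rw [← Real.rpow_add hD, he]
  calc _ ≤ p / q * (∑ x ∈ F ×ˢ S, |f x.1 - f (x.1 * x.2)| ^ p) ^ (1 / p) *
        (2 * #S * D) ^ ((p - q) / (p * q)) / D ^ (1 / q) := by
        gcongr
        refine (Lq_abs_rpow_sub_abs_rpow_le (F ×ˢ S) (fun x => f x.1) (fun x => f (x.1 * x.2)) hq0
          hpq).trans ?_
        gcongr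
        exact sum_product_max_abs_rpow_le hF hp0
    _ = 2 ^ ((p - q) / (p * q)) * #S ^ ((p - q) / (p * q)) * (p / q) *
        ((∑ x ∈ F ×ˢ S, |f x.1 - f (x.1 * x.2)| ^ p) ^ (1 / p) / D ^ (1 / p)) := by
        rw [Real.mul_rpow (by positivity) hD.le, Real.mul_rpow zero_le_two (Nat.cast_nonneg _), hD']
        field_simp
    _ ≤ _ := by
        gcongr ?_ * _ * _ * _
        exact Real.rpow_le_rpow_of_exponent_le one_le_two (by linarith [one_div_pos.2 hp0])

/-- Let `G` be a group generated by a finite set `S`, let `p > q ≥ 1`, and let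
`f : G → ℝ` be finitely supported and not identically zero. Then
`h = |f|^(p/q)` has the same support as `f` and satisfies
`‖∇h‖_q / ‖h‖_q ≤ 2^(1/q) · |S|^((p−q)/(pq)) · (p/q) · ‖∇f‖_p / ‖f‖_p`, where
`∇u(g,s) = u(g) − u(gs)` and the `ℓ^p` norms are as usual. -/
theorem stmt_2 (G : Type*) [Group G] (S : Finset G)
    (hgen : Subgroup.closure (S : Set G) = ⊤)
    (p q : ℝ) (hq : 1 ≤ q) (hpq : q < p)
    (f : G → ℝ) (hf : (Function.support f).Finite) (hf0 : f ≠ 0) :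
    Function.support (fun g : G => |f g| ^ (p / q)) = Function.support f ∧
    (∑' g : G, ∑ s ∈ S, |(|f g| ^ (p / q)) - (|f (g * s)| ^ (p / q))| ^ q) ^ (1 / q)
        / (∑' g : G, |(|f g| ^ (p / q))| ^ q) ^ (1 / q)
      ≤ 2 ^ (1 / q) * (S.card : ℝ) ^ ((p - q) / (p * q)) * (p / q) *
          ((∑' g : G, ∑ s ∈ S, |f g - f (g * s)| ^ p) ^ (1 / p)
            / (∑' g : G, |f g| ^ p) ^ (1 / p)) :=
  stmt_2_general G S p q hq hpq f hf hf0
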